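/- Summability of weighted gradient norms: under the expected descent inequality E[F(θ_{t+1})] ≤ E[F(θ_t)] − α_t E[‖∇F(θ_t)‖²] + (L/2) α_t² G², with F bounded below and Σ_{t=0}^∞ α_t² < ∞, it follows that Σ_{t=0}^∞ α_t E[‖∇F(θ_t)‖²] < ∞; combined with Σ α_t = ∞ this gives liminf_{t→∞} E[‖∇F(θ_t)‖²] = 0. -/
import Mathlib


open Filter

/-- Summability of weighted gradient norms. If
`e_{t+1} ≤ e_t − α_t n_t + (L/2)α_t²G²` (with `e_t = E[F(θ_t)]`,
`n_t = E[‖∇F(θ_t)‖²] ≥ 0`), `e` is bounded below and `Σ α_t² < ∞`, then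
`Σ α_t n_t < ∞`; combined with `Σ α_t = ∞` this gives `liminf n_t = 0`. -/
theorem stmt7 (e n α : ℕ → ℝ) (Fstar L G : ℝ)
    (hn : ∀ t, 0 ≤ n t) (hα : ∀ t, 0 < α t)
    (hdesc : ∀ t, e (t + 1) ≤ e t - α t * n t + L / 2 * (α t) ^ 2 * G ^ 2)
    (hbdd : ∀ t, Fstar ≤ e t)
    (hα2 : Summable fun t => (α t) ^ 2) :
    (Summable fun t => α t * n t) ∧
      (¬ Summable α → liminf n atTop = 0) := by
  -- abbreviate the noise term
  set g : ℕ → ℝ := fun t => L / 2 * (α t) ^ 2 * G ^ 2 with hg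
  have hgsum : Summable fun t => |g t| := by
    have h := hα2.mul_left (L / 2 * G ^ 2)
    have heq : (fun t => L / 2 * G ^ 2 * (α t) ^ 2) = g := by
      funext t; simp only [hg]; ring
    rw [heq] at h
    exact h.abs
  -- partial sums bound
  have key : ∀ T, ∑ t ∈ Finset.range T, α t * n t ≤ e 0 - e T + ∑ t ∈ Finset.range T, |g t| := by
    intro T
    induction T with
    | zero => simp
    | succ T ih =>
      rw [Finset.sum_range_succ, Finset.sum_range_succ]
      have h1 := hdesc T
      have hgT : g T = L / 2 * α T ^ 2 * G ^ 2 := rfl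
      have h1' : e (T + 1) ≤ e T - α T * n T + g T := by rw [hgT]; exact h1
      have h2 : α T * n T ≤ e T - e (T + 1) + |g T| :=
        by linarith [le_abs_self (g T)]
      linarith
  have hbound : ∀ T, ∑ t ∈ Finset.range T, α t * n t ≤ e 0 - Fstar + ∑' t, |g t| := by
    intro T
    refine (key T).trans ?_
    have h1 : ∑ t ∈ Finset.range T, |g t| ≤ ∑' t, |g t| :=
      Summable.sum_le_tsum _ (fun t _ => abs_nonneg _) hgsum
    have h2 := hbdd T
    linarith
  have hsum : Summable fun t => α t * n t :=
    summable_of_sum_range_le (fun t => mul_nonneg (hα t).le (hn t)) hbound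
  refine ⟨hsum, fun hdiv => ?_⟩
  -- for every ε > 0, frequently n t ≤ ε
  have hfreq : ∀ ε : ℝ, 0 < ε → ∃ᶠ t in atTop, n t ≤ ε := by
    intro ε hε
    by_contra h
    rw [not_frequently] at h
    simp only [not_le] at h
    apply hdiv
    obtain ⟨N, hN⟩ := eventually_atTop.mp h
    have hs2 : Summable fun t => α (t + N) * n (t + N) :=
      (summable_nat_add_iff N).mpr hsum
    have : Summable fun t => ε * α (t + N) := by
      apply Summable.of_nonneg_of_le (fun t => mul_nonneg hε.le (hα _).le) ?_ hs2
      intro t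
      have h1 := (hN (t + N) (Nat.le_add_left _ _)).le
      have h2 := (hα (t + N)).le
      calc ε * α (t + N) ≤ n (t + N) * α (t + N) := by nlinarith
        _ = α (t + N) * n (t + N) := mul_comm _ _
    have := (summable_mul_left_iff (ne_of_gt hε)).mp this
    exact (summable_nat_add_iff N).mp this
  have hcobdd : IsCoboundedUnder (· ≥ ·) atTop n :=
    IsCoboundedUnder.of_frequently_le (hfreq 1 one_pos)
  have h0 : (0:ℝ) ≤ liminf n atTop := by
    refine le_liminf_of_le (u := n) (f := atTop) hcobdd ?_
    exact Eventually.of_forall hn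
  have hle : ∀ ε : ℝ, 0 < ε → liminf n atTop ≤ ε := fun ε hε =>
    liminf_le_of_frequently_le (hfreq ε hε) ⟨0, eventually_map.mpr (Eventually.of_forall hn)⟩
  refine le_antisymm (le_of_forall_pos_le_add fun ε hε => ?_) h0
  simpa using hle ε hε
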